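/- Let μ₂ > 0, v > 1, μ₁ ≥ 0, let N be an integer with N ≥ βμ₁, and let h be a real number (possibly negative) with h ≥ μ₁ − N/β. Then there exists a constant C = C(β,v,μ₁,μ₂,h,N) such that for all r, r' > 0 and R > 0 with rr' < 9R²/10: Σ_{k=N}^∞ k^{μ₂} |G_{k/β − μ₁, v, h}(r,r',R)| ≤ C · R^{2−2v}. -/

import Mathlib

open Real MeasureTheory

/-- Modified Bessel function of order `v`:
`I_v(z) = ∑_{j=0}^∞ (z/2)^{v+2j} / (j! Γ(v+j+1))`. -/
noncomputable def besselI (v z : ℝ) : ℝ :=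
  ∑' j : ℕ, (z / 2) ^ (v + 2 * (j : ℝ)) / ((j.factorial : ℝ) * Real.Gamma (v + (j : ℝ) + 1))

/-- `G_{μ,v,h}(r,r',R) = π ∫_0^∞ (2πt)^{−v} (rr'/(2t))^h e^{−(r²+r'²+R²)/(4t)} I_μ(rr'/(2t)) dt`. -/
noncomputable def Gfun (μ v h r r' R : ℝ) : ℝ :=
  π * ∫ t in Set.Ioi (0 : ℝ),
    (2 * π * t) ^ (-v) * (r * r' / (2 * t)) ^ h *
      Real.exp (-(r ^ 2 + r' ^ 2 + R ^ 2) / (4 * t)) * besselI μ (r * r' / (2 * t))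

/-!
Comparing the series of `I_μ` termwise with that of `cosh` gives
`I_μ(z) ≤ (z/2)^μ e^z / Γ(μ+1)`, and `e^{rr'/(2t)}` is absorbed by `e^{-(r²+r'²)/(4t)}`.
What is left is `∫₀^∞ t^{-s-1} e^{-R²/(4t)} dt = (4/R²)^s Γ(s)` with `s = v + h + μ - 1`, so for
`rr' ≤ 9R²/10` one gets `|G_{μ,v,h}| ≤ A_{v,h} (9/10)^μ Γ(μ + v + h - 1) / Γ(μ + 1) R^{2-2v}`.
Along `μ = k/β - μ₁` the factor `(9/10)^μ` decays geometrically in `k`, while `k^{μ₂}` and the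
Gamma ratio grow only polynomially, so the weighted series converges.
-/

open Set
open scoped Nat

lemma Nat.factorial_two_mul_le_four_pow_mul_sq (j : ℕ) : (2 * j)! ≤ 4 ^ j * j ! ^ 2 := by
  have h := Nat.choose_mul_factorial_mul_factorial (show j ≤ 2 * j by omega)
  rw [show 2 * j - j = j by omega] at h
  rw [← h, ← Nat.centralBinom_eq_two_mul_choose, sq, ← mul_assoc]
  exact Nat.mul_le_mul_right _ (Nat.mul_le_mul_right _ (Nat.centralBinom_le_four_pow j))

lemma factorial_mul_Gamma_le_Gamma {μ : ℝ} (hμ : 0 ≤ μ) (j : ℕ) :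
    j ! * Gamma (μ + 1) ≤ Gamma (μ + j + 1) := by
  induction j with
  | zero => simp
  | succ j ih =>
    rw [show μ + ((j + 1 : ℕ) : ℝ) + 1 = (μ + j + 1) + 1 by push_cast; ring,
      Gamma_add_one (show μ + j + 1 ≠ 0 by positivity), Nat.factorial_succ, Nat.cast_mul,
      Nat.cast_succ, mul_assoc]
    exact mul_le_mul (by linarith) ih (by positivity) (by positivity)

lemma besselI_term_nonneg {μ z : ℝ} (hμ : 0 ≤ μ) (hz : 0 ≤ z) (j : ℕ) :
    0 ≤ (z / 2) ^ (μ + 2 * (j : ℝ)) / (j ! * Gamma (μ + j + 1)) := by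
  positivity

lemma besselI_term_le {μ z : ℝ} (hμ : 0 ≤ μ) (hz : 0 ≤ z) (j : ℕ) :
    (z / 2) ^ (μ + 2 * (j : ℝ)) / (j ! * Gamma (μ + j + 1)) ≤
      (z / 2) ^ μ / Gamma (μ + 1) * (z ^ (2 * j) / (2 * j)!) := by
  have hden : ((2 * j)! : ℝ) * Gamma (μ + 1) ≤ 4 ^ j * (j ! * Gamma (μ + j + 1)) :=
    calc ((2 * j)! : ℝ) * Gamma (μ + 1)
        ≤ 4 ^ j * j ! ^ 2 * Gamma (μ + 1) := by
          gcongr; exact_mod_cast Nat.factorial_two_mul_le_four_pow_mul_sq j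
      _ = 4 ^ j * j ! * (j ! * Gamma (μ + 1)) := by ring
      _ ≤ 4 ^ j * j ! * Gamma (μ + j + 1) := by gcongr; exact factorial_mul_Gamma_le_Gamma hμ j
      _ = _ := by ring
  have hpow : (z / 2) ^ (μ + 2 * (j : ℝ)) = (z / 2) ^ μ * (z ^ (2 * j) / 4 ^ j) := by
    rw [Real.rpow_add_of_nonneg (by positivity) hμ (by positivity),
      show 2 * (j : ℝ) = ((2 * j : ℕ) : ℝ) by push_cast; ring, Real.rpow_natCast, div_pow, pow_mul,
      pow_mul]
    norm_num
  rw [hpow, div_mul_div_comm, mul_div_assoc, mul_div_assoc, div_div]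
  gcongr (z / 2) ^ μ * ?_
  rw [div_le_div_iff₀ (by positivity) (by positivity)]
  calc _ = z ^ (2 * j) * ((2 * j)! * Gamma (μ + 1)) := by ring
    _ ≤ z ^ (2 * j) * (4 ^ j * (j ! * Gamma (μ + j + 1))) := by gcongr
    _ = _ := by ring

lemma besselI_le_cosh {μ z : ℝ} (hμ : 0 ≤ μ) (hz : 0 ≤ z) :
    besselI μ z ≤ (z / 2) ^ μ / Gamma (μ + 1) * cosh z := by
  have hcosh := (Real.hasSum_cosh z).mul_left ((z / 2) ^ μ / Gamma (μ + 1))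
  exact hcosh.tsum_eq ▸ Summable.tsum_le_tsum (besselI_term_le hμ hz)
    (hcosh.summable.of_nonneg_of_le (besselI_term_nonneg hμ hz) (besselI_term_le hμ hz))
    hcosh.summable

lemma besselI_nonneg {μ z : ℝ} (hμ : 0 ≤ μ) (hz : 0 ≤ z) : 0 ≤ besselI μ z :=
  tsum_nonneg (besselI_term_nonneg hμ hz)

lemma exp_mul_exp_le_exp_neg_sq_div {x y z t : ℝ} (ht : 0 < t) :
    exp (-(x ^ 2 + y ^ 2 + z ^ 2) / (4 * t)) * exp (x * y / (2 * t)) ≤ exp (-(z ^ 2 / 4 / t)) := by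
  rw [← exp_add, exp_le_exp, div_add_div _ _ (by positivity) (by positivity),
    div_le_iff₀ (by positivity)]
  have : 0 ≤ (x - y) ^ 2 * t := by positivity
  field_simp
  nlinarith

lemma Gfun_integrand_le {μ v h r r' R t : ℝ} (hμ : 0 ≤ μ) (hr : 0 < r) (hr' : 0 < r')
    (ht : 0 < t) :
    ‖(2 * π * t) ^ (-v) * (r * r' / (2 * t)) ^ h *
        exp (-(r ^ 2 + r' ^ 2 + R ^ 2) / (4 * t)) * besselI μ (r * r' / (2 * t))‖ ≤
      (2 * π) ^ (-v) * (r * r' / 2) ^ (h + μ) * 2 ^ (-μ) / Gamma (μ + 1) *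
        (t ^ (-(v + h + μ - 1) - 1) * exp (-(R ^ 2 / 4 / t))) := by
  have hz : r * r' / (2 * t) = r * r' / 2 / t := by ring
  have hz0 : 0 < r * r' / 2 / t := by positivity
  have hcosh : cosh (r * r' / 2 / t) ≤ exp (r * r' / 2 / t) := by
    rw [cosh_eq]; linarith [exp_le_exp.2 (by linarith : -(r * r' / 2 / t) ≤ r * r' / 2 / t)]
  have hpow : (2 * π * t) ^ (-v) * (r * r' / 2 / t) ^ h * (r * r' / 2 / t / 2) ^ μ =
      (2 * π) ^ (-v) * (r * r' / 2) ^ (h + μ) * 2 ^ (-μ) * t ^ (-(v + h + μ - 1) - 1) := by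
    have ha : 0 < r * r' / 2 := by positivity
    rw [Real.mul_rpow (by positivity) ht.le, Real.div_rpow ha.le ht.le, div_div,
      Real.div_rpow ha.le (by positivity), Real.mul_rpow ht.le zero_le_two, Real.rpow_add ha,
      show -(v + h + μ - 1) - 1 = -v + -h + -μ by ring, Real.rpow_add ht, Real.rpow_add ht,
      Real.rpow_neg ht.le, Real.rpow_neg ht.le, Real.rpow_neg ht.le, Real.rpow_neg zero_le_two]
    field_simp
  rw [Real.norm_of_nonneg (by have := besselI_nonneg hμ hz0.le; rw [hz]; positivity), hz]
  calc _ ≤ (2 * π * t) ^ (-v) * (r * r' / 2 / t) ^ h * exp (-(r ^ 2 + r' ^ 2 + R ^ 2) / (4 * t)) *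
        ((r * r' / 2 / t / 2) ^ μ / Gamma (μ + 1) * exp (r * r' / 2 / t)) := by
        gcongr
        exact (besselI_le_cosh hμ hz0.le).trans (by gcongr)
    _ = (2 * π * t) ^ (-v) * (r * r' / 2 / t) ^ h * (r * r' / 2 / t / 2) ^ μ / Gamma (μ + 1) *
        (exp (-(r ^ 2 + r' ^ 2 + R ^ 2) / (4 * t)) * exp (r * r' / (2 * t))) := by
        rw [hz]; ring
    _ ≤ _ := by
        rw [hpow, mul_div_right_comm, mul_assoc]
        gcongr
        exact exp_mul_exp_le_exp_neg_sq_div ht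

lemma integral_rpow_neg_sub_one_mul_exp_neg_div_Ioi {s c : ℝ} (hs : 0 < s) (hc : 0 < c) :
    ∫ t in Ioi 0, t ^ (-s - 1) * exp (-(c / t)) = (1 / c) ^ s * Gamma s := by
  rw [← integral_rpow_mul_exp_neg_mul_Ioi hs hc,
    ← integral_comp_rpow_Ioi (fun t => t ^ (s - 1) * exp (-(c * t))) (p := -1) (by norm_num)]
  refine setIntegral_congr_fun measurableSet_Ioi fun t (ht : 0 < t) => ?_
  rw [smul_eq_mul, abs_neg, abs_one, one_mul, ← Real.rpow_mul ht.le, ← mul_assoc,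
    ← Real.rpow_add ht, Real.rpow_neg_one, div_eq_mul_inv]
  ring_nf

lemma integrableOn_rpow_neg_sub_one_mul_exp_neg_div_Ioi {s c : ℝ} (hs : 0 < s) (hc : 0 < c) :
    IntegrableOn (fun t => t ^ (-s - 1) * exp (-(c / t))) (Ioi 0) :=
  .of_integral_ne_zero <| by
    rw [integral_rpow_neg_sub_one_mul_exp_neg_div_Ioi hs hc]; positivity

lemma abs_Gfun_le {μ v h r r' R : ℝ} (hμ : 0 ≤ μ) (hs : 0 < v + h + μ - 1) (hr : 0 < r)
    (hr' : 0 < r') (hR : 0 < R) :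
    |Gfun μ v h r r' R| ≤ π * ((2 * π) ^ (-v) * (r * r' / 2) ^ (h + μ) * 2 ^ (-μ) / Gamma (μ + 1) *
      ((1 / (R ^ 2 / 4)) ^ (v + h + μ - 1) * Gamma (v + h + μ - 1))) := by
  have hc : 0 < R ^ 2 / 4 := by positivity
  rw [Gfun, abs_mul, abs_of_pos pi_pos, ← integral_rpow_neg_sub_one_mul_exp_neg_div_Ioi hs hc,
    ← integral_const_mul, ← Real.norm_eq_abs]
  gcongr
  refine norm_integral_le_of_norm_le
    ((integrableOn_rpow_neg_sub_one_mul_exp_neg_div_Ioi hs hc).const_mul _) ?_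
  exact (ae_restrict_iff' measurableSet_Ioi).2 <|
    .of_forall fun t ht => Gfun_integrand_le hμ hr hr' ht

lemma abs_Gfun_le_of_mul_le_sq {μ v h r r' R : ℝ} (hμ : 0 ≤ μ) (hhμ : 0 ≤ h + μ) (hv : 1 < v)
    (hr : 0 < r) (hr' : 0 < r') (hR : 0 < R) (hrr : r * r' ≤ 9 * R ^ 2 / 10) :
    |Gfun μ v h r r' R| ≤ π * (2 * π) ^ (-v) * 4 ^ (v - 1) * (9 / 5) ^ h *
      ((9 / 10) ^ μ * (Gamma (μ + (v + h - 1)) / Gamma (μ + 1))) * R ^ (2 - 2 * v) := by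
  have hQ : (1 / (R ^ 2 / 4)) ^ (v + h + μ - 1) =
      4 ^ (v - 1) * R ^ (2 - 2 * v) * (4 / R ^ 2) ^ (h + μ) := by
    rw [one_div_div, show v + h + μ - 1 = (v - 1) + (h + μ) by ring,
      Real.rpow_add (by positivity), Real.div_rpow (by norm_num) (by positivity),
      ← Real.rpow_natCast, ← Real.rpow_mul hR.le, div_eq_mul_inv, ← Real.rpow_neg hR.le]
    push_cast; ring_nf
  have hfar : (r * r' / 2) ^ (h + μ) * (4 / R ^ 2) ^ (h + μ) ≤ (9 / 5) ^ h * (9 / 5) ^ μ := by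
    rw [← Real.mul_rpow (by positivity) (by positivity), ← Real.rpow_add (by norm_num)]
    refine Real.rpow_le_rpow (by positivity) ?_ hhμ
    rw [div_mul_div_comm, div_le_iff₀ (by positivity)]
    linarith
  have hhalf : (9 / 5 : ℝ) ^ μ * 2 ^ (-μ) = (9 / 10) ^ μ := by
    rw [Real.rpow_neg zero_le_two, ← div_eq_mul_inv, ← Real.div_rpow (by norm_num) zero_le_two]
    norm_num
  refine (abs_Gfun_le hμ (by linarith) hr hr' hR).trans ?_
  rw [hQ, show v + h + μ - 1 = μ + (v + h - 1) by ring]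
  calc _ = π * (2 * π) ^ (-v) * 4 ^ (v - 1) * R ^ (2 - 2 * v) * (Gamma (μ + (v + h - 1)) /
        Gamma (μ + 1)) * 2 ^ (-μ) * ((r * r' / 2) ^ (h + μ) * (4 / R ^ 2) ^ (h + μ)) := by ring
    _ ≤ π * (2 * π) ^ (-v) * 4 ^ (v - 1) * R ^ (2 - 2 * v) * (Gamma (μ + (v + h - 1)) /
        Gamma (μ + 1)) * 2 ^ (-μ) * ((9 / 5) ^ h * (9 / 5) ^ μ) := by
        have : 0 < Gamma (μ + (v + h - 1)) := Gamma_pos_of_pos (by linarith)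
        gcongr
    _ = _ := by rw [← hhalf]; ring

lemma Gamma_add_nat_le_mul_pow {y : ℝ} (hy : 0 < y) (n : ℕ) :
    Gamma (y + n) ≤ Gamma y * (y + n) ^ n := by
  induction n with
  | zero => simp
  | succ n ih =>
    have := Gamma_pos_of_pos hy
    rw [Nat.cast_succ, ← add_assoc, Gamma_add_one (by positivity)]
    calc (y + n) * Gamma (y + n) ≤ (y + n) * (Gamma y * (y + n) ^ n) := by gcongr
      _ = Gamma y * (y + n) ^ (n + 1) := by ring
      _ ≤ Gamma y * (y + n + 1) ^ (n + 1) :=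
        mul_le_mul_of_nonneg_left (pow_le_pow_left₀ (by positivity) (by linarith) _) this.le

lemma mul_Gamma_add_le {m c σ : ℝ} (hm : 0 < m + 1) (hσ : 0 < σ) (hσc : σ ≤ m + c) {n : ℕ}
    (hn : c + 1 ≤ n) : σ * Gamma (m + c) ≤ Gamma (m + 1) * (m + 1 + n) ^ n :=
  calc σ * Gamma (m + c) ≤ (m + c + 1) * (m + c) * Gamma (m + c) := by
        have := Gamma_pos_of_pos (hσ.trans_le hσc)
        gcongr
        nlinarith
    _ = Gamma (m + c + 2) := by
        rw [show m + c + 2 = m + c + 1 + 1 by ring, Gamma_add_one (by linarith),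
          Gamma_add_one (by linarith), mul_assoc]
    -- `Gamma` is only known to be monotone on `[2, ∞)`, hence the shift by two.
    _ ≤ Gamma (m + 1 + n) := Gamma_strictMonoOn_Ici.monotoneOn
        (mem_Ici.2 (by linarith)) (mem_Ici.2 (by linarith)) (by linarith)
    _ ≤ Gamma (m + 1) * (m + 1 + n) ^ n := Gamma_add_nat_le_mul_pow hm n

lemma summable_add_one_pow_mul_geometric {ρ : ℝ} (hρ₀ : 0 < ρ) (hρ₁ : ρ < 1) (K : ℕ) :
    Summable fun j : ℕ => ((j : ℝ) + 1) ^ K * ρ ^ j := by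
  have hshift := ((summable_nat_add_iff (f := fun n : ℕ => (n : ℝ) ^ K * ρ ^ n) 1).2 <|
    summable_pow_mul_geometric_of_norm_lt_one K (by rwa [Real.norm_of_nonneg hρ₀.le])).mul_left ρ⁻¹
  refine hshift.congr fun j => ?_
  simp only [Nat.cast_add, Nat.cast_one, pow_succ]
  field_simp

lemma add_rpow_le_mul_pow {N p : ℝ} (hN : 0 ≤ N) (hp : 0 ≤ p) (j : ℕ) :
    (N + j) ^ p ≤ (N + 1) ^ ⌈p⌉₊ * ((j : ℝ) + 1) ^ ⌈p⌉₊ := by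
  have hj : (0 : ℝ) ≤ j := j.cast_nonneg
  calc (N + j) ^ p ≤ ((N + 1) * (j + 1)) ^ p := by gcongr; nlinarith
    _ ≤ ((N + 1) * (j + 1)) ^ (⌈p⌉₊ : ℝ) :=
      Real.rpow_le_rpow_of_exponent_le (by nlinarith) (Nat.le_ceil p)
    _ = _ := by rw [Real.rpow_natCast, mul_pow]

lemma summable_rpow_mul_rpow_mul_Gamma_div_Gamma {N p a m₀ c q : ℝ} {x : ℕ → ℝ} (hN : 0 ≤ N)
    (hp : 0 ≤ p) (ha : 0 < a) (hm₀ : 0 ≤ m₀) (hc : 0 < m₀ + c) (hq₀ : 0 < q) (hq₁ : q < 1)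
    (hx : ∀ j, x j = m₀ + a * j) :
    Summable fun j : ℕ => (N + j) ^ p * (q ^ x j * (Gamma (x j + c) / Gamma (x j + 1))) := by
  set n := ⌈c + 1⌉₊
  set K := ⌈p⌉₊
  set D := m₀ + 1 + n + a
  have hρ₀ : 0 < q ^ a := Real.rpow_pos_of_pos hq₀ a
  have hρ₁ : q ^ a < 1 := Real.rpow_lt_one hq₀.le hq₁ ha
  have hxm (j : ℕ) : m₀ ≤ x j := hx j ▸ le_add_of_nonneg_right (by positivity)
  have hΓc (j : ℕ) : 0 < Gamma (x j + c) := Gamma_pos_of_pos (by linarith [hxm j])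
  have hΓ₁ (j : ℕ) : 0 < Gamma (x j + 1) := Gamma_pos_of_pos (by linarith [hxm j])
  refine Summable.of_nonneg_of_le (fun j => ?_) (fun j => ?_)
    ((summable_add_one_pow_mul_geometric hρ₀ hρ₁ (K + n)).mul_left
      ((N + 1) ^ K * q ^ m₀ * D ^ n / (m₀ + c)))
  · have := hΓc j; have := hΓ₁ j
    positivity
  have hj : (0 : ℝ) ≤ j := j.cast_nonneg
  have hgeom : q ^ x j = q ^ m₀ * (q ^ a) ^ j := by
    rw [hx, Real.rpow_add hq₀, ← Real.rpow_natCast, ← Real.rpow_mul hq₀.le]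
  have hratio : Gamma (x j + c) / Gamma (x j + 1) ≤ D ^ n * ((j : ℝ) + 1) ^ n / (m₀ + c) := by
    have hpoly : x j + 1 + n ≤ D * (j + 1) := by rw [hx]; nlinarith
    rw [div_le_div_iff₀ (hΓ₁ j) hc]
    calc Gamma (x j + c) * (m₀ + c) = (m₀ + c) * Gamma (x j + c) := mul_comm _ _
      _ ≤ Gamma (x j + 1) * (x j + 1 + n) ^ n :=
        mul_Gamma_add_le (by linarith [hxm j]) hc (by linarith [hxm j]) (Nat.le_ceil _)
      _ ≤ Gamma (x j + 1) * (D * (j + 1)) ^ n := by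
        have : (0 : ℝ) ≤ n := n.cast_nonneg
        exact mul_le_mul_of_nonneg_left (pow_le_pow_left₀ (by linarith [hxm j]) hpoly n) (hΓ₁ j).le
      _ = _ := by rw [mul_pow]; ring
  calc (N + j) ^ p * (q ^ x j * (Gamma (x j + c) / Gamma (x j + 1)))
      ≤ (N + 1) ^ K * ((j : ℝ) + 1) ^ K * (q ^ m₀ * (q ^ a) ^ j *
        (D ^ n * ((j : ℝ) + 1) ^ n / (m₀ + c))) := by
        have := hΓc j; have := hΓ₁ j
        rw [hgeom]
        gcongr
        exact add_rpow_le_mul_pow hN hp j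
    _ = _ := by ring

theorem G_weighted_sum_bound_far_general (β : ℝ) (hβ0 : 0 < β)
    (μ₁ μ₂ v h : ℝ) (N : ℕ) (hμ₂ : 0 < μ₂) (hv : 1 < v)
    (hN : β * μ₁ ≤ (N : ℝ)) (hh : μ₁ - (N : ℝ) / β ≤ h) :
    ∃ C > 0, ∀ r r' R : ℝ, 0 < r → 0 < r' → 0 < R → r * r' < 9 * R ^ 2 / 10 →
      (∑' j : ℕ, ((N : ℝ) + (j : ℝ)) ^ μ₂ *
          |Gfun (((N : ℝ) + (j : ℝ)) / β - μ₁) v h r r' R|) ≤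
        C * R ^ (2 - 2 * v) := by
  set A := π * (2 * π) ^ (-v) * 4 ^ (v - 1) * (9 / 5 : ℝ) ^ h
  set μ : ℕ → ℝ := fun j => ((N : ℝ) + j) / β - μ₁
  set w : ℕ → ℝ := fun j =>
    ((N : ℝ) + j) ^ μ₂ * ((9 / 10) ^ μ j * (Gamma (μ j + (v + h - 1)) / Gamma (μ j + 1)))
  have hμ (j : ℕ) : μ j = ((N : ℝ) / β - μ₁) + β⁻¹ * j := by simp only [μ]; ring
  have hm₀ : 0 ≤ (N : ℝ) / β - μ₁ := by rw [sub_nonneg, le_div_iff₀ hβ0]; linarith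
  have hμ₀ (j : ℕ) : (N : ℝ) / β - μ₁ ≤ μ j := hμ j ▸ le_add_of_nonneg_right (by positivity)
  have hw : Summable w := summable_rpow_mul_rpow_mul_Gamma_div_Gamma N.cast_nonneg hμ₂.le
    (inv_pos.2 hβ0) hm₀ (by linarith) (by norm_num) (by norm_num) hμ
  have hΓ (j : ℕ) : 0 < Gamma (μ j + (v + h - 1)) / Gamma (μ j + 1) :=
    div_pos (Gamma_pos_of_pos (by linarith [hμ₀ j])) (Gamma_pos_of_pos (by linarith [hμ₀ j]))
  have hw₀ (j : ℕ) : 0 ≤ w j := by have := hΓ j; positivity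
  have hw₁ : 0 < w 1 := by have := hΓ 1; positivity
  refine ⟨A * ∑' j, w j, by positivity [hw.tsum_pos hw₀ 1 hw₁], fun r r' R hr hr' hR hrr => ?_⟩
  have hterm (j : ℕ) :
      ((N : ℝ) + j) ^ μ₂ * |Gfun (μ j) v h r r' R| ≤ A * R ^ (2 - 2 * v) * w j := by
    have hG := abs_Gfun_le_of_mul_le_sq (μ := μ j) (h := h) (by linarith [hμ₀ j])
      (by linarith [hμ₀ j]) hv hr hr' hR hrr.le
    calc _ ≤ ((N : ℝ) + j) ^ μ₂ * (A * ((9 / 10) ^ μ j * (Gamma (μ j + (v + h - 1)) /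
          Gamma (μ j + 1))) * R ^ (2 - 2 * v)) := by gcongr
      _ = _ := by ring
  calc _ ≤ ∑' j, A * R ^ (2 - 2 * v) * w j :=
        (hw.mul_left _).of_nonneg_of_le (fun j => by positivity) hterm |>.tsum_le_tsum hterm
          (hw.mul_left _)
    _ = _ := by rw [tsum_mul_left]; ring

/-- For `μ₂ > 0`, `v > 1`, `μ₁ ≥ 0`, integer `N ≥ βμ₁` and `h ≥ μ₁ − N/β`, there is `C`
such that for all `r, r' > 0`, `R > 0` with `rr' < 9R²/10`:
`Σ_{k=N}^∞ k^{μ₂} |G_{k/β−μ₁,v,h}(r,r',R)| ≤ C R^{2−2v}`. -/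
theorem G_weighted_sum_bound_far (β : ℝ) (hβ0 : 0 < β) (hβ1 : β < 1)
    (μ₁ μ₂ v h : ℝ) (N : ℕ) (hμ₂ : 0 < μ₂) (hv : 1 < v) (hμ₁ : 0 ≤ μ₁)
    (hN : β * μ₁ ≤ (N : ℝ)) (hh : μ₁ - (N : ℝ) / β ≤ h) :
    ∃ C > 0, ∀ r r' R : ℝ, 0 < r → 0 < r' → 0 < R → r * r' < 9 * R ^ 2 / 10 →
      (∑' j : ℕ, ((N : ℝ) + (j : ℝ)) ^ μ₂ *
          |Gfun (((N : ℝ) + (j : ℝ)) / β - μ₁) v h r r' R|) ≤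
        C * R ^ (2 - 2 * v) :=
  G_weighted_sum_bound_far_general β hβ0 μ₁ μ₂ v h N hμ₂ hv hN hh
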